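/- arXiv:1703.02281 — 4 statements merged into one kernel-verified Lean document; each statement's English description precedes it below -/
import Mathlib

section
/- Let Ω ⊆ ℝ³ be open, I ⊆ ℝ an open interval, V₀ ∈ ℝ, and let Ψ : Ω × I → ℂ and A : Ω × I → ℝ³ be smooth (C^∞). Suppose that at every (x,t) ∈ Ω × I both equations of the temporal-gauge Maxwell–Schrödinger system hold: (i) −i∂_tΨ + (1/2)( −Δ_xΨ + i·div_x(AΨ) + i·A·∇_xΨ + |A|²Ψ ) + V₀Ψ = 0, and (ii) ∂_t²A + curl(curl A) + (i/2)( conj(Ψ)∇_xΨ − Ψ·conj(∇_xΨ) ) + |Ψ|²A = 0, where curl P = (∂₂P₃ − ∂₃P₂, ∂₃P₁ − ∂₁P₃, ∂₁P₂ − ∂₂P₁). Then at every (x,t): ∂_t( ∂_t(div_x A) + |Ψ|² ) = 0. -/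
open Complex ComplexConjugate

noncomputable section

/-- Spatial partial derivative of a real-valued function on `ℝ³`. -/
def pd3 (j : Fin 3) (f : EuclideanSpace ℝ (Fin 3) → ℝ)
    (x : EuclideanSpace ℝ (Fin 3)) : ℝ :=
  fderiv ℝ f x (EuclideanSpace.single j 1)

/-- The `j`-th component of the spatial gradient of a complex-valued function on `ℝ³`. -/
def gradC3 (f : EuclideanSpace ℝ (Fin 3) → ℂ)
    (x : EuclideanSpace ℝ (Fin 3)) (j : Fin 3) : ℂ :=
  fderiv ℝ f x (EuclideanSpace.single j 1)

/-- The curl of a vector field on `ℝ³`: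
`curl P = (∂₂P₃ − ∂₃P₂, ∂₃P₁ − ∂₁P₃, ∂₁P₂ − ∂₂P₁)` (with indices `0,1,2`). -/
def curl3 (P : EuclideanSpace ℝ (Fin 3) → Fin 3 → ℝ)
    (x : EuclideanSpace ℝ (Fin 3)) : Fin 3 → ℝ :=
  ![pd3 1 (fun y => P y 2) x - pd3 2 (fun y => P y 1) x,
    pd3 2 (fun y => P y 0) x - pd3 0 (fun y => P y 2) x,
    pd3 0 (fun y => P y 1) x - pd3 1 (fun y => P y 0) x]

/-- The spatial divergence of a vector field on `ℝ³`. -/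
def div3 (P : EuclideanSpace ℝ (Fin 3) → Fin 3 → ℝ)
    (x : EuclideanSpace ℝ (Fin 3)) : ℝ :=
  ∑ j, pd3 j (fun y => P y j) x

/-- The covariant Laplacian `(i∇+a)²ψ := −Δψ + i·div(aψ) + i·a·∇ψ + |a|²ψ` at a point. -/
def covLap3 (a : EuclideanSpace ℝ (Fin 3) → Fin 3 → ℝ)
    (ψ : EuclideanSpace ℝ (Fin 3) → ℂ) (x : EuclideanSpace ℝ (Fin 3)) : ℂ :=
  -(∑ j, fderiv ℝ (fun y => fderiv ℝ ψ y (EuclideanSpace.single j 1)) x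
      (EuclideanSpace.single j 1))
    + Complex.I * (∑ j, fderiv ℝ (fun y => (a y j : ℂ) * ψ y) x (EuclideanSpace.single j 1))
    + Complex.I * (∑ j, (a x j : ℂ) * fderiv ℝ ψ x (EuclideanSpace.single j 1))
    + ((∑ j, (a x j) ^ 2 : ℝ) : ℂ) * ψ x

abbrev E3 := EuclideanSpace ℝ (Fin 3) × ℝ

variable {X Y : Type*} [NormedAddCommGroup X] [NormedSpace ℝ X]
  [NormedAddCommGroup Y] [NormedSpace ℝ Y]

/-- Directional derivative on the product space. -/
def Dd (v : E3) (f : E3 → X) (p : E3) : X := fderiv ℝ f p v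

abbrev vx (j : Fin 3) : E3 := (EuclideanSpace.single j 1, 0)
abbrev vt : E3 := ((0 : EuclideanSpace ℝ (Fin 3)), 1)

lemma diffAt {U : Set E3} (hU : IsOpen U) {f : E3 → X} (hf : ContDiffOn ℝ (⊤ : ℕ∞) f U)
    {p : E3} (hp : p ∈ U) : DifferentiableAt ℝ f p :=
  (hf.differentiableOn (by simp)).differentiableAt (hU.mem_nhds hp)

lemma Dd_contDiffOn {U : Set E3} (hU : IsOpen U) {f : E3 → X} (hf : ContDiffOn ℝ (⊤ : ℕ∞) f U)
    (v : E3) : ContDiffOn ℝ (⊤ : ℕ∞) (Dd v f) U :=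
  (hf.fderiv_of_isOpen hU (by exact (by simp))).clm_apply contDiffOn_const

lemma Dd_swap {U : Set E3} (hU : IsOpen U) {f : E3 → X} (hf : ContDiffOn ℝ (⊤ : ℕ∞) f U)
    {p : E3} (hp : p ∈ U) (u v : E3) : Dd u (Dd v f) p = Dd v (Dd u f) p := by
  have hsymm : IsSymmSndFDerivAt ℝ f p :=
    (hf.contDiffAt (hU.mem_nhds hp)).isSymmSndFDerivAt (by exact (by simp [minSmoothness_of_isRCLikeNormedField]; exact WithTop.coe_le_coe.2 le_top))
  have hd2 : DifferentiableAt ℝ (fderiv ℝ f) p :=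
    ((hf.fderiv_of_isOpen hU (by exact (by exact WithTop.coe_le_coe.2 le_top))).differentiableOn
      (n := 1) one_ne_zero).differentiableAt (hU.mem_nhds hp)
  have key : ∀ a b : E3, Dd a (Dd b f) p = fderiv ℝ (fderiv ℝ f) p a b := by
    intro a b
    have h1 : HasFDerivAt (fun q => fderiv ℝ f q b)
        ((ContinuousLinearMap.apply ℝ X b).comp (fderiv ℝ (fderiv ℝ f) p)) p :=
      (ContinuousLinearMap.apply ℝ X b).hasFDerivAt.comp p hd2.hasFDerivAt
    show fderiv ℝ (fun q => fderiv ℝ f q b) p a = _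
    rw [h1.fderiv]; rfl
  rw [key, key, hsymm u v]

lemma sliceX {f : E3 → X} {x : EuclideanSpace ℝ (Fin 3)} {t : ℝ}
    (h : DifferentiableAt ℝ f (x, t)) (u : EuclideanSpace ℝ (Fin 3)) :
    fderiv ℝ (fun y => f (y, t)) x u = Dd (u, 0) f (x, t) := by
  have h1 : HasFDerivAt (fun y => f (y, t))
      ((fderiv ℝ f (x, t)).comp (ContinuousLinearMap.inl ℝ _ ℝ)) x :=
    h.hasFDerivAt.comp x (hasFDerivAt_prodMk_left x t)
  rw [h1.fderiv]; rfl

lemma sliceT {f : E3 → X} {x : EuclideanSpace ℝ (Fin 3)} {t : ℝ}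
    (h : DifferentiableAt ℝ f (x, t)) :
    deriv (fun s => f (x, s)) t = Dd vt f (x, t) := by
  have h1 : HasFDerivAt (fun s => f (x, s))
      ((fderiv ℝ f (x, t)).comp (ContinuousLinearMap.inr ℝ _ ℝ)) t :=
    h.hasFDerivAt.comp t (hasFDerivAt_prodMk_right x t)
  rw [h1.hasDerivAt.deriv]; rfl

lemma Dd_congr_nhds {f g : E3 → X} {p : E3} (h : f =ᶠ[nhds p] g) (v : E3) :
    Dd v f p = Dd v g p := by unfold Dd; rw [h.fderiv_eq]

lemma Dd_congr_on {U : Set E3} (hU : IsOpen U) {f g : E3 → X} {p : E3} (hp : p ∈ U)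
    (h : ∀ q ∈ U, f q = g q) (v : E3) : Dd v f p = Dd v g p :=
  Dd_congr_nhds (Filter.eventuallyEq_of_mem (hU.mem_nhds hp) h) v

lemma Dd_add {f g : E3 → X} {p : E3} (hf : DifferentiableAt ℝ f p)
    (hg : DifferentiableAt ℝ g p) (v : E3) :
    Dd v (fun q => f q + g q) p = Dd v f p + Dd v g p := by
  unfold Dd; rw [fderiv_fun_add hf hg]; rfl

lemma Dd_sub {f g : E3 → X} {p : E3} (hf : DifferentiableAt ℝ f p)
    (hg : DifferentiableAt ℝ g p) (v : E3) :
    Dd v (fun q => f q - g q) p = Dd v f p - Dd v g p := by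
  unfold Dd; rw [fderiv_fun_sub hf hg]; rfl

lemma Dd_neg {f : E3 → ℝ} {p : E3} (hf : DifferentiableAt ℝ f p) (v : E3) :
    Dd v (fun q => -(f q)) p = -(Dd v f p) := by
  unfold Dd; rw [fderiv_fun_neg]; rfl

lemma Dd_zero {p : E3} (v : E3) : Dd v (fun _ => (0 : ℝ)) p = 0 := by
  unfold Dd; simp

lemma Dd_Dd_sub {U : Set E3} (hU : IsOpen U) {f g : E3 → ℝ}
    (hf : ContDiffOn ℝ (⊤ : ℕ∞) f U) (hg : ContDiffOn ℝ (⊤ : ℕ∞) g U) {p : E3} (hp : p ∈ U) (u v : E3) :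
    Dd u (Dd v (fun q => f q - g q)) p = Dd u (Dd v f) p - Dd u (Dd v g) p := by
  have h1 : ∀ q ∈ U, Dd v (fun q => f q - g q) q = Dd v f q - Dd v g q := fun q hq =>
    Dd_sub (diffAt hU hf hq) (diffAt hU hg hq) v
  rw [Dd_congr_on hU hp h1 u]
  exact Dd_sub (diffAt hU (Dd_contDiffOn hU hf v) hp)
    (diffAt hU (Dd_contDiffOn hU hg v) hp) u

lemma Dd_sum {n : ℕ} {f : Fin n → E3 → X} {p : E3}
    (hf : ∀ i, DifferentiableAt ℝ (f i) p) (v : E3) :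
    Dd v (fun q => ∑ i, f i q) p = ∑ i, Dd v (f i) p := by
  unfold Dd
  rw [fderiv_fun_sum (fun i _ => hf i)]
  simp

lemma Dd_clm (L : X →L[ℝ] Y) {f : E3 → X} {p : E3} (hf : DifferentiableAt ℝ f p) (v : E3) :
    Dd v (fun q => L (f q)) p = L (Dd v f p) := by
  unfold Dd
  rw [show (fun q => L (f q)) = L ∘ f from rfl, (L.hasFDerivAt.comp p hf.hasFDerivAt).fderiv]
  rfl

lemma Dd_mul {f g : E3 → ℂ} {p : E3} (hf : DifferentiableAt ℝ f p)
    (hg : DifferentiableAt ℝ g p) (v : E3) :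
    Dd v (fun q => f q * g q) p = Dd v f p * g p + f p * Dd v g p := by
  unfold Dd
  rw [fderiv_fun_mul hf hg]
  simp [mul_comm]
  ring

lemma Dd_mulR {f g : E3 → ℝ} {p : E3} (hf : DifferentiableAt ℝ f p)
    (hg : DifferentiableAt ℝ g p) (v : E3) :
    Dd v (fun q => f q * g q) p = Dd v f p * g p + f p * Dd v g p := by
  unfold Dd
  rw [fderiv_fun_mul hf hg]
  simp [mul_comm]
  ring

lemma Dd_conj {f : E3 → ℂ} {p : E3} (hf : DifferentiableAt ℝ f p) (v : E3) :
    Dd v (fun q => conj (f q)) p = conj (Dd v f p) := by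
  simpa using Dd_clm (Complex.conjCLE.toContinuousLinearMap) hf v

lemma diffAt_conj {f : E3 → ℂ} {p : E3} (hf : DifferentiableAt ℝ f p) :
    DifferentiableAt ℝ (fun q => conj (f q)) p :=
  (Complex.conjCLE.differentiable.differentiableAt).comp p hf

lemma contDiffOn_conj {U : Set E3} {f : E3 → ℂ} (hf : ContDiffOn ℝ (⊤ : ℕ∞) f U) :
    ContDiffOn ℝ (⊤ : ℕ∞) (fun q => conj (f q)) U :=
  Complex.conjCLE.toContinuousLinearMap.contDiff.comp_contDiffOn hf

lemma contDiffOn_normSq {U : Set E3} {f : E3 → ℂ} (hf : ContDiffOn ℝ (⊤ : ℕ∞) f U) :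
    ContDiffOn ℝ (⊤ : ℕ∞) (fun q => Complex.normSq (f q)) U := by
  have : (fun q => Complex.normSq (f q))
      = fun q => (f q).re * (f q).re + (f q).im * (f q).im :=
    funext fun q => Complex.normSq_apply _
  rw [this]
  exact ((Complex.reCLM.contDiff.comp_contDiffOn hf).mul
      (Complex.reCLM.contDiff.comp_contDiffOn hf)).add
    ((Complex.imCLM.contDiff.comp_contDiffOn hf).mul
      (Complex.imCLM.contDiff.comp_contDiffOn hf))

lemma Dd_normSq {f : E3 → ℂ} {p : E3} (hf : DifferentiableAt ℝ f p) (v : E3) :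
    Dd v (fun q => Complex.normSq (f q)) p = 2 * (conj (f p) * Dd v f p).re := by
  have h1 : (fun q => Complex.normSq (f q)) = fun q => (conj (f q) * f q).re := by
    funext q
    rw [← Complex.normSq_eq_conj_mul_self]
    simp
  have h2 := Dd_clm Complex.reCLM ((diffAt_conj hf).fun_mul hf) v
  simp only [Complex.reCLM_apply] at h2
  rw [h1, h2, Dd_mul (diffAt_conj hf) hf v, Dd_conj hf v]
  simp [Complex.add_re, Complex.mul_re]
  ring

lemma cont_alg (f Dw : ℂ) (fj fjj : Fin 3 → ℂ) (a a' : Fin 3 → ℝ) (V₀ : ℝ)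
    (h : -Complex.I * Dw + (1/2 : ℂ) *
      (-(∑ j, fjj j) + Complex.I * (∑ j, ((a' j : ℂ) * f + (a j : ℂ) * fj j))
        + Complex.I * (∑ j, (a j : ℂ) * fj j) + ((∑ j, (a j)^2 : ℝ) : ℂ) * f)
      + (V₀ : ℂ) * f = 0) :
    ∑ j, (-((conj (fj j) * fj j + conj f * fjj j).im)
        + (2 * (conj f * fj j).re * a j + Complex.normSq f * a' j))
      = 2 * (conj f * Dw).re := by
  have hDw : Dw = -Complex.I * ((1/2 : ℂ) *
      (-(∑ j, fjj j) + Complex.I * (∑ j, ((a' j : ℂ) * f + (a j : ℂ) * fj j))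
        + Complex.I * (∑ j, (a j : ℂ) * fj j) + ((∑ j, (a j)^2 : ℝ) : ℂ) * f)
      + (V₀ : ℂ) * f) := by
    linear_combination Complex.I * h + Dw * Complex.I_sq
  subst hDw
  simp only [Fin.sum_univ_three, Complex.normSq_apply, Complex.mul_re, Complex.mul_im,
    Complex.add_re, Complex.add_im, Complex.sub_re, Complex.sub_im, Complex.neg_re,
    Complex.neg_im, Complex.I_re, Complex.I_im, Complex.ofReal_re, Complex.ofReal_im,
    Complex.conj_re, Complex.conj_im, Complex.one_re, Complex.one_im, Complex.div_re,
    Complex.div_im, Complex.normSq_ofNat, Complex.re_ofNat, Complex.im_ofNat]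
  ring

lemma sliceX' {f : E3 → X} {g : EuclideanSpace ℝ (Fin 3) → X}
    {x : EuclideanSpace ℝ (Fin 3)} {t : ℝ} (hfg : ∀ y, g y = f (y, t))
    (h : DifferentiableAt ℝ f (x, t)) (u : EuclideanSpace ℝ (Fin 3)) :
    fderiv ℝ g x u = Dd (u, 0) f (x, t) := by
  rw [funext hfg]; exact sliceX h u

lemma sliceT' {f : E3 → X} {g : ℝ → X} {x : EuclideanSpace ℝ (Fin 3)} {t : ℝ}
    (hfg : ∀ s, g s = f (x, s)) (h : DifferentiableAt ℝ f (x, t)) :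
    deriv g t = Dd vt f (x, t) := by
  rw [funext hfg]; exact sliceT h

lemma re_extract (X Y N a : ℝ) (f g : ℂ)
    (h : (X : ℂ) + (Y : ℂ) + (Complex.I / 2) * (conj f * g - f * conj g)
      + (N : ℂ) * (a : ℂ) = 0) :
    X + Y + (-((conj f * g).im) + N * a) = 0 := by
  have h2 := congrArg Complex.re h
  simp only [Complex.add_re, Complex.mul_re, Complex.sub_re, Complex.sub_im,
    Complex.ofReal_re, Complex.ofReal_im, Complex.div_re, Complex.div_im, Complex.I_re,
    Complex.I_im, Complex.conj_re, Complex.conj_im, Complex.zero_re, Complex.normSq_ofNat,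
    Complex.re_ofNat, Complex.im_ofNat, Complex.mul_im] at h2 ⊢
  ring_nf at h2 ⊢
  linarith

/-- The curl operator on `E3`-fields written with `Dd`. -/
def curlD (B : Fin 3 → E3 → ℝ) : Fin 3 → E3 → ℝ :=
  ![fun p => Dd (vx 1) (B 2) p - Dd (vx 2) (B 1) p,
    fun p => Dd (vx 2) (B 0) p - Dd (vx 0) (B 2) p,
    fun p => Dd (vx 0) (B 1) p - Dd (vx 1) (B 0) p]

theorem key (U : Set E3) (hU : IsOpen U) (V₀ : ℝ)
    (F : E3 → ℂ) (B : Fin 3 → E3 → ℝ)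
    (hF : ContDiffOn ℝ (⊤ : ℕ∞) F U) (hB : ∀ j, ContDiffOn ℝ (⊤ : ℕ∞) (B j) U)
    (hS : ∀ p ∈ U, -Complex.I * Dd vt F p + (1/2 : ℂ) *
      (-(∑ j, Dd (vx j) (Dd (vx j) F) p)
        + Complex.I * (∑ j, Dd (vx j) (fun q => ((B j q : ℝ) : ℂ) * F q) p)
        + Complex.I * (∑ j, ((B j p : ℝ) : ℂ) * Dd (vx j) F p)
        + ((∑ j, (B j p)^2 : ℝ) : ℂ) * F p)
      + (V₀ : ℂ) * F p = 0)
    (hM : ∀ p ∈ U, ∀ j : Fin 3, Dd vt (Dd vt (B j)) p + curlD (curlD B) j p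
      + (-((conj (F p) * Dd (vx j) F p).im) + Complex.normSq (F p) * B j p) = 0) :
    ∀ p ∈ U, Dd vt (fun q => Dd vt (fun r => ∑ j, Dd (vx j) (B j) r) q
      + Complex.normSq (F q)) p = 0 := by
  intro p hp
  -- smoothness facts
  have hDB : ∀ (v : E3) (j : Fin 3), ContDiffOn ℝ (⊤ : ℕ∞) (Dd v (B j)) U :=
    fun v j => Dd_contDiffOn hU (hB j) v
  have hGsm : ContDiffOn ℝ (⊤ : ℕ∞) (fun r => ∑ j, Dd (vx j) (B j) r) U :=
    ContDiffOn.sum (fun j _ => hDB _ j)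
  have hNN : ContDiffOn ℝ (⊤ : ℕ∞) (fun q => Complex.normSq (F q)) U := contDiffOn_normSq hF
  have hDF : ∀ v : E3, ContDiffOn ℝ (⊤ : ℕ∞) (Dd v F) U := fun v => Dd_contDiffOn hU hF v
  have hcurlB : ∀ k : Fin 3, ContDiffOn ℝ (⊤ : ℕ∞) (curlD B k) U := by
    intro k
    fin_cases k
    · exact (hDB _ 2).sub (hDB _ 1)
    · exact (hDB _ 0).sub (hDB _ 2)
    · exact (hDB _ 1).sub (hDB _ 0)
  have hccB : ∀ k : Fin 3, ContDiffOn ℝ (⊤ : ℕ∞) (curlD (curlD B) k) U := by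
    intro k
    fin_cases k
    · exact (Dd_contDiffOn hU (hcurlB 2) _).sub (Dd_contDiffOn hU (hcurlB 1) _)
    · exact (Dd_contDiffOn hU (hcurlB 0) _).sub (Dd_contDiffOn hU (hcurlB 2) _)
    · exact (Dd_contDiffOn hU (hcurlB 1) _).sub (Dd_contDiffOn hU (hcurlB 0) _)
  have hJ : ∀ j : Fin 3, ContDiffOn ℝ (⊤ : ℕ∞)
      (fun q => -((conj (F q) * Dd (vx j) F q).im) + Complex.normSq (F q) * B j q) U := by
    intro j
    exact ((Complex.imCLM.contDiff.comp_contDiffOn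
      ((contDiffOn_conj hF).mul (hDF (vx j)))).neg).add (hNN.mul (hB j))
  -- step 1: split outer derivative
  have step1 : Dd vt (fun q => Dd vt (fun r => ∑ j, Dd (vx j) (B j) r) q
      + Complex.normSq (F q)) p
      = Dd vt (Dd vt (fun r => ∑ j, Dd (vx j) (B j) r)) p
        + Dd vt (fun q => Complex.normSq (F q)) p :=
    Dd_add (diffAt hU (Dd_contDiffOn hU hGsm vt) hp) (diffAt hU hNN hp) vt
  -- step 2
  have step2 : Dd vt (Dd vt (fun r => ∑ j, Dd (vx j) (B j) r)) p
      = ∑ j, Dd vt (Dd vt (Dd (vx j) (B j))) p := by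
    have e1 : ∀ q ∈ U, Dd vt (fun r => ∑ j, Dd (vx j) (B j) r) q
        = ∑ j, Dd vt (Dd (vx j) (B j)) q := fun q hq =>
      Dd_sum (fun j => diffAt hU (hDB _ j) hq) vt
    rw [Dd_congr_on hU hp e1 vt]
    exact Dd_sum (fun j => diffAt hU (Dd_contDiffOn hU (hDB _ j) vt) hp) vt
  -- step 3: swaps
  have step3 : ∀ j : Fin 3, Dd vt (Dd vt (Dd (vx j) (B j))) p
      = Dd (vx j) (Dd vt (Dd vt (B j))) p := by
    intro j
    have e1 : ∀ q ∈ U, Dd vt (Dd (vx j) (B j)) q = Dd (vx j) (Dd vt (B j)) q :=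
      fun q hq => Dd_swap hU (hB j) hq vt (vx j)
    rw [Dd_congr_on hU hp e1 vt]
    exact Dd_swap hU (Dd_contDiffOn hU (hB j) vt) hp vt (vx j)
  -- step 4: divergence of the Maxwell equation
  have step4 : ∀ j : Fin 3,
      Dd (vx j) (Dd vt (Dd vt (B j))) p + Dd (vx j) (curlD (curlD B) j) p
        + Dd (vx j) (fun q => -((conj (F q) * Dd (vx j) F q).im)
            + Complex.normSq (F q) * B j q) p = 0 := by
    intro j
    have h0 : Dd (vx j) (fun q => Dd vt (Dd vt (B j)) q + curlD (curlD B) j q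
        + (-((conj (F q) * Dd (vx j) F q).im) + Complex.normSq (F q) * B j q)) p = 0 := by
      rw [Dd_congr_on hU hp (fun q hq => hM q hq j) (vx j)]
      exact Dd_zero _
    rw [Dd_add ((diffAt hU (Dd_contDiffOn hU (hDB vt j) vt) hp).fun_add
        (diffAt hU (hccB j) hp)) (diffAt hU (hJ j) hp) (vx j),
      Dd_add (diffAt hU (Dd_contDiffOn hU (hDB vt j) vt) hp)
        (diffAt hU (hccB j) hp) (vx j)] at h0
    exact h0
  -- step 5: div curl curl = 0
  have sw : ∀ (a b c k : Fin 3), Dd (vx a) (Dd (vx b) (Dd (vx c) (B k))) p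
      = Dd (vx b) (Dd (vx a) (Dd (vx c) (B k))) p :=
    fun a b c k => Dd_swap hU (Dd_contDiffOn hU (hB k) (vx c)) hp _ _
  have step5 : ∑ j, Dd (vx j) (curlD (curlD B) j) p = 0 := by
    have ex0 : Dd (vx 0) (curlD (curlD B) 0) p
        = (Dd (vx 0) (Dd (vx 1) (Dd (vx 0) (B 1))) p
            - Dd (vx 0) (Dd (vx 1) (Dd (vx 1) (B 0))) p)
          - (Dd (vx 0) (Dd (vx 2) (Dd (vx 2) (B 0))) p
            - Dd (vx 0) (Dd (vx 2) (Dd (vx 0) (B 2))) p) := by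
      rw [show curlD (curlD B) 0
          = fun q => Dd (vx 1) (curlD B 2) q - Dd (vx 2) (curlD B 1) q from rfl,
        Dd_sub (diffAt hU (Dd_contDiffOn hU (hcurlB 2) _) hp)
          (diffAt hU (Dd_contDiffOn hU (hcurlB 1) _) hp) _,
        show curlD B 2 = fun q => Dd (vx 0) (B 1) q - Dd (vx 1) (B 0) q from rfl,
        show curlD B 1 = fun q => Dd (vx 2) (B 0) q - Dd (vx 0) (B 2) q from rfl,
        Dd_Dd_sub hU (hDB _ 1) (hDB _ 0) hp _ _,
        Dd_Dd_sub hU (hDB _ 0) (hDB _ 2) hp _ _]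
    have ex1 : Dd (vx 1) (curlD (curlD B) 1) p
        = (Dd (vx 1) (Dd (vx 2) (Dd (vx 1) (B 2))) p
            - Dd (vx 1) (Dd (vx 2) (Dd (vx 2) (B 1))) p)
          - (Dd (vx 1) (Dd (vx 0) (Dd (vx 0) (B 1))) p
            - Dd (vx 1) (Dd (vx 0) (Dd (vx 1) (B 0))) p) := by
      rw [show curlD (curlD B) 1
          = fun q => Dd (vx 2) (curlD B 0) q - Dd (vx 0) (curlD B 2) q from rfl,
        Dd_sub (diffAt hU (Dd_contDiffOn hU (hcurlB 0) _) hp)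
          (diffAt hU (Dd_contDiffOn hU (hcurlB 2) _) hp) _,
        show curlD B 0 = fun q => Dd (vx 1) (B 2) q - Dd (vx 2) (B 1) q from rfl,
        show curlD B 2 = fun q => Dd (vx 0) (B 1) q - Dd (vx 1) (B 0) q from rfl,
        Dd_Dd_sub hU (hDB _ 2) (hDB _ 1) hp _ _,
        Dd_Dd_sub hU (hDB _ 1) (hDB _ 0) hp _ _]
    have ex2 : Dd (vx 2) (curlD (curlD B) 2) p
        = (Dd (vx 2) (Dd (vx 0) (Dd (vx 2) (B 0))) p
            - Dd (vx 2) (Dd (vx 0) (Dd (vx 0) (B 2))) p)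
          - (Dd (vx 2) (Dd (vx 1) (Dd (vx 1) (B 2))) p
            - Dd (vx 2) (Dd (vx 1) (Dd (vx 2) (B 1))) p) := by
      rw [show curlD (curlD B) 2
          = fun q => Dd (vx 0) (curlD B 1) q - Dd (vx 1) (curlD B 0) q from rfl,
        Dd_sub (diffAt hU (Dd_contDiffOn hU (hcurlB 1) _) hp)
          (diffAt hU (Dd_contDiffOn hU (hcurlB 0) _) hp) _,
        show curlD B 1 = fun q => Dd (vx 2) (B 0) q - Dd (vx 0) (B 2) q from rfl,
        show curlD B 0 = fun q => Dd (vx 1) (B 2) q - Dd (vx 2) (B 1) q from rfl,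
        Dd_Dd_sub hU (hDB _ 0) (hDB _ 2) hp _ _,
        Dd_Dd_sub hU (hDB _ 2) (hDB _ 1) hp _ _]
    rw [Fin.sum_univ_three, ex0, ex1, ex2]
    linarith [sw 0 1 0 1, sw 0 1 1 0, sw 0 2 2 0, sw 0 2 0 2, sw 1 2 1 2, sw 1 2 2 1]
  -- step 6: continuity equation
  have hdiffBC : ∀ j : Fin 3, DifferentiableAt ℝ (fun q => ((B j q : ℝ) : ℂ)) p :=
    fun j => Complex.ofRealCLM.differentiable.differentiableAt.comp p (diffAt hU (hB j) hp)
  have hPj : ∀ j : Fin 3, Dd (vx j) (fun q => ((B j q : ℝ) : ℂ) * F q) p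
      = ((Dd (vx j) (B j) p : ℝ) : ℂ) * F p + ((B j p : ℝ) : ℂ) * Dd (vx j) F p := by
    intro j
    rw [Dd_mul (hdiffBC j) (diffAt hU hF hp) (vx j)]
    have h2 := Dd_clm Complex.ofRealCLM (diffAt hU (hB j) hp) (vx j)
    simp only [Complex.ofRealCLM_apply] at h2
    rw [h2]
  have hS' := hS p hp
  simp only [hPj] at hS'
  have step6 : ∑ j, Dd (vx j) (fun q => -((conj (F q) * Dd (vx j) F q).im)
      + Complex.normSq (F q) * B j q) p = 2 * (conj (F p) * Dd vt F p).re := by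
    have expand : ∀ j : Fin 3, Dd (vx j) (fun q => -((conj (F q) * Dd (vx j) F q).im)
        + Complex.normSq (F q) * B j q) p
        = -((conj (Dd (vx j) F p) * Dd (vx j) F p
              + conj (F p) * Dd (vx j) (Dd (vx j) F) p).im)
          + (2 * (conj (F p) * Dd (vx j) F p).re * B j p
              + Complex.normSq (F p) * Dd (vx j) (B j) p) := by
      intro j
      have d1 : DifferentiableAt ℝ (fun q => (conj (F q) * Dd (vx j) F q).im) p := by
        have := diffAt hU ((Complex.imCLM.contDiff.comp_contDiffOn
          ((contDiffOn_conj hF).mul (hDF (vx j)))) :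
            ContDiffOn ℝ (⊤ : ℕ∞) (fun q => Complex.imCLM (conj (F q) * Dd (vx j) F q)) U) hp
        exact this
      rw [Dd_add (d1.fun_neg) (diffAt hU (hNN.mul (hB j)) hp) (vx j),
        Dd_neg d1 (vx j),
        Dd_mulR (diffAt hU hNN hp) (diffAt hU (hB j) hp) (vx j),
        Dd_normSq (diffAt hU hF hp) (vx j)]
      have h3 := Dd_clm Complex.imCLM
        ((diffAt_conj (diffAt hU hF hp)).fun_mul (diffAt hU (hDF (vx j)) hp)) (vx j)
      simp only [Complex.imCLM_apply] at h3
      rw [h3, Dd_mul (diffAt_conj (diffAt hU hF hp)) (diffAt hU (hDF (vx j)) hp) (vx j),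
        Dd_conj (diffAt hU hF hp) (vx j)]
    simp only [expand]
    exact cont_alg (F p) (Dd vt F p) (fun j => Dd (vx j) F p)
      (fun j => Dd (vx j) (Dd (vx j) F) p) (fun j => B j p)
      (fun j => Dd (vx j) (B j) p) V₀ hS'
  -- step 7
  have step7 : Dd vt (fun q => Complex.normSq (F q)) p
      = 2 * (conj (F p) * Dd vt F p).re := Dd_normSq (diffAt hU hF hp) vt
  -- assemble
  rw [step1, step2, step7]
  have hsum := Finset.sum_congr rfl (fun j (_ : j ∈ Finset.univ) => step3 j)
  rw [hsum]
  have htotal : ∑ j : Fin 3, (Dd (vx j) (Dd vt (Dd vt (B j))) p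
      + Dd (vx j) (curlD (curlD B) j) p
      + Dd (vx j) (fun q => -((conj (F q) * Dd (vx j) F q).im)
          + Complex.normSq (F q) * B j q) p) = 0 := by
    simp only [step4]
    simp
  rw [Finset.sum_add_distrib, Finset.sum_add_distrib, step5, step6] at htotal
  linarith [htotal]

/-- For smooth solutions of the temporal-gauge Maxwell–Schrödinger system on `Ω × I`,
the quantity `∂_t(div A) + |Ψ|²` is constant in time: `∂_t(∂_t(div A) + |Ψ|²) = 0`. -/
theorem stmt4 (Ω : Set (EuclideanSpace ℝ (Fin 3))) (hΩ : IsOpen Ω)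
    (I : Set ℝ) (hIopen : IsOpen I) (hIconn : I.OrdConnected) (V₀ : ℝ)
    (Ψ : EuclideanSpace ℝ (Fin 3) → ℝ → ℂ)
    (A : EuclideanSpace ℝ (Fin 3) → ℝ → Fin 3 → ℝ)
    (hΨ : ContDiffOn ℝ (⊤ : ℕ∞) (fun p : EuclideanSpace ℝ (Fin 3) × ℝ => Ψ p.1 p.2) (Ω ×ˢ I))
    (hA : ContDiffOn ℝ (⊤ : ℕ∞) (fun p : EuclideanSpace ℝ (Fin 3) × ℝ => A p.1 p.2) (Ω ×ˢ I))
    (hSchrod : ∀ x ∈ Ω, ∀ t ∈ I,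
      -Complex.I * deriv (fun s => Ψ x s) t
        + (1 / 2 : ℂ) * covLap3 (fun y j => A y t j) (fun y => Ψ y t) x
        + (V₀ : ℂ) * Ψ x t = 0)
    (hMaxwell : ∀ x ∈ Ω, ∀ t ∈ I, ∀ j : Fin 3,
      ((deriv (fun s => deriv (fun τ => A x τ j) s) t : ℝ) : ℂ)
        + ((curl3 (fun y => curl3 (fun z => A z t) y) x j : ℝ) : ℂ)
        + (Complex.I / 2) * (conj (Ψ x t) * gradC3 (fun z => Ψ z t) x j
            - Ψ x t * conj (gradC3 (fun z => Ψ z t) x j))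
        + (Complex.normSq (Ψ x t) : ℂ) * (A x t j : ℂ) = 0) :
    ∀ x ∈ Ω, ∀ t ∈ I,
      deriv (fun s => deriv (fun τ => div3 (fun y => A y τ) x) s
        + Complex.normSq (Ψ x s)) t = 0 := by
  classical
  set U : Set E3 := Ω ×ˢ I with hUdef
  have hU : IsOpen U := hΩ.prod hIopen
  set F : E3 → ℂ := fun p => Ψ p.1 p.2 with hFdef
  set B : Fin 3 → E3 → ℝ := fun j p => A p.1 p.2 j with hBdef
  have hF : ContDiffOn ℝ (⊤ : ℕ∞) F U := hΨ
  have hBc : ∀ j, ContDiffOn ℝ (⊤ : ℕ∞) (B j) U := fun j => contDiffOn_pi.1 hA j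
  have hDF : ∀ v : E3, ContDiffOn ℝ (⊤ : ℕ∞) (Dd v F) U := fun v => Dd_contDiffOn hU hF v
  have hDB : ∀ (v : E3) (j : Fin 3), ContDiffOn ℝ (⊤ : ℕ∞) (Dd v (B j)) U :=
    fun v j => Dd_contDiffOn hU (hBc j) v
  have hcurlB : ∀ k : Fin 3, ContDiffOn ℝ (⊤ : ℕ∞) (curlD B k) U := by
    intro k
    fin_cases k
    · exact (hDB _ 2).sub (hDB _ 1)
    · exact (hDB _ 0).sub (hDB _ 2)
    · exact (hDB _ 1).sub (hDB _ 0)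
  -- translation of pd3 applied to slices of smooth functions on E3
  have hpd3 : ∀ (g b : Fin 3), ∀ y ∈ Ω, ∀ s ∈ I,
      pd3 g (fun y' => A y' s b) y = Dd (vx g) (B b) (y, s) := by
    intro g b y hy s hs
    exact sliceX' (g := fun y' => A y' s b) (f := B b) (fun _ => rfl)
      (diffAt hU (hBc b) (Set.mk_mem_prod hy hs)) _
  have hcurl1 : ∀ s ∈ I, ∀ y ∈ Ω, ∀ k : Fin 3,
      curl3 (fun z => A z s) y k = curlD B k (y, s) := by
    intro s hs y hy k
    fin_cases k
    · show pd3 1 (fun y' => A y' s 2) y - pd3 2 (fun y' => A y' s 1) y = _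
      rw [hpd3 1 2 y hy s hs, hpd3 2 1 y hy s hs]; rfl
    · show pd3 2 (fun y' => A y' s 0) y - pd3 0 (fun y' => A y' s 2) y = _
      rw [hpd3 2 0 y hy s hs, hpd3 0 2 y hy s hs]; rfl
    · show pd3 0 (fun y' => A y' s 1) y - pd3 1 (fun y' => A y' s 0) y = _
      rw [hpd3 0 1 y hy s hs, hpd3 1 0 y hy s hs]; rfl
  have hpdcurl : ∀ (g b : Fin 3), ∀ y ∈ Ω, ∀ s ∈ I,
      pd3 g (fun y' => curl3 (fun z => A z s) y' b) y
        = Dd (vx g) (curlD B b) (y, s) := by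
    intro g b y hy s hs
    have hev : (fun y' => curl3 (fun z => A z s) y' b)
        =ᶠ[nhds y] (fun y' => curlD B b (y', s)) := by
      filter_upwards [hΩ.mem_nhds hy] with y' hy' using hcurl1 s hs y' hy' b
    show fderiv ℝ (fun y' => curl3 (fun z => A z s) y' b) y (EuclideanSpace.single g 1) = _
    rw [hev.fderiv_eq]
    exact sliceX' (fun _ => rfl) (diffAt hU (hcurlB b) (Set.mk_mem_prod hy hs)) _
  have hcurl2 : ∀ y ∈ Ω, ∀ s ∈ I, ∀ j : Fin 3,
      curl3 (fun y' => curl3 (fun z => A z s) y') y j = curlD (curlD B) j (y, s) := by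
    intro y hy s hs j
    fin_cases j
    · show pd3 1 (fun y' => curl3 (fun z => A z s) y' 2) y
        - pd3 2 (fun y' => curl3 (fun z => A z s) y' 1) y = _
      rw [hpdcurl 1 2 y hy s hs, hpdcurl 2 1 y hy s hs]; rfl
    · show pd3 2 (fun y' => curl3 (fun z => A z s) y' 0) y
        - pd3 0 (fun y' => curl3 (fun z => A z s) y' 2) y = _
      rw [hpdcurl 2 0 y hy s hs, hpdcurl 0 2 y hy s hs]; rfl
    · show pd3 0 (fun y' => curl3 (fun z => A z s) y' 1) y
        - pd3 1 (fun y' => curl3 (fun z => A z s) y' 0) y = _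
      rw [hpdcurl 0 1 y hy s hs, hpdcurl 1 0 y hy s hs]; rfl
  have hgrad : ∀ y ∈ Ω, ∀ s ∈ I, ∀ j : Fin 3,
      gradC3 (fun z => Ψ z s) y j = Dd (vx j) F (y, s) := by
    intro y hy s hs j
    exact sliceX' (g := fun z => Ψ z s) (f := F) (fun _ => rfl)
      (diffAt hU hF (Set.mk_mem_prod hy hs)) _
  have hdd : ∀ y ∈ Ω, ∀ s ∈ I, ∀ j : Fin 3,
      deriv (fun s' => deriv (fun τ => A y τ j) s') s = Dd vt (Dd vt (B j)) (y, s) := by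
    intro y hy s hs j
    have hinner : ∀ σ ∈ I, deriv (fun τ => A y τ j) σ = Dd vt (B j) (y, σ) := by
      intro σ hσ
      exact sliceT' (g := fun τ => A y τ j) (f := B j) (fun _ => rfl)
        (diffAt hU (hBc j) (Set.mk_mem_prod hy hσ))
    have hev : (fun s' => deriv (fun τ => A y τ j) s')
        =ᶠ[nhds s] (fun s' => Dd vt (B j) (y, s')) := by
      filter_upwards [hIopen.mem_nhds hs] with σ hσ using hinner σ hσ
    rw [hev.deriv_eq]
    exact sliceT' (fun _ => rfl) (diffAt hU (hDB vt j) (Set.mk_mem_prod hy hs))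
  -- translated Maxwell equation
  have hM : ∀ p ∈ U, ∀ j : Fin 3, Dd vt (Dd vt (B j)) p + curlD (curlD B) j p
      + (-((conj (F p) * Dd (vx j) F p).im) + Complex.normSq (F p) * B j p) = 0 := by
    rintro ⟨y, s⟩ ⟨hy, hs⟩ j
    have h := hMaxwell y hy s hs j
    rw [hdd y hy s hs j, hcurl2 y hy s hs j, hgrad y hy s hs j] at h
    exact re_extract _ _ _ _ _ _ h
  -- translated Schrödinger equation
  have hS : ∀ p ∈ U, -Complex.I * Dd vt F p + (1/2 : ℂ) *
      (-(∑ j, Dd (vx j) (Dd (vx j) F) p)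
        + Complex.I * (∑ j, Dd (vx j) (fun q => ((B j q : ℝ) : ℂ) * F q) p)
        + Complex.I * (∑ j, ((B j p : ℝ) : ℂ) * Dd (vx j) F p)
        + ((∑ j, (B j p)^2 : ℝ) : ℂ) * F p)
      + (V₀ : ℂ) * F p = 0 := by
    rintro ⟨y, s⟩ ⟨hy, hs⟩
    have h := hSchrod y hy s hs
    have hder : deriv (fun s' => Ψ y s') s = Dd vt F (y, s) :=
      sliceT' (fun _ => rfl) (diffAt hU hF (Set.mk_mem_prod hy hs))
    have ht1 : ∀ j : Fin 3,
        fderiv ℝ (fun y' => fderiv ℝ (fun y'' => Ψ y'' s) y' (EuclideanSpace.single j 1)) y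
          (EuclideanSpace.single j 1) = Dd (vx j) (Dd (vx j) F) (y, s) := by
      intro j
      have hev : (fun y' => fderiv ℝ (fun y'' => Ψ y'' s) y' (EuclideanSpace.single j 1))
          =ᶠ[nhds y] (fun y' => Dd (vx j) F (y', s)) := by
        filter_upwards [hΩ.mem_nhds hy] with y' hy'
        exact sliceX' (g := fun y'' => Ψ y'' s) (f := F) (fun _ => rfl)
          (diffAt hU hF (Set.mk_mem_prod hy' hs)) _
      rw [hev.fderiv_eq]
      exact sliceX' (fun _ => rfl) (diffAt hU (hDF (vx j)) (Set.mk_mem_prod hy hs)) _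
    have ht2 : ∀ j : Fin 3,
        fderiv ℝ (fun y' => ((A y' s j : ℝ) : ℂ) * Ψ y' s) y (EuclideanSpace.single j 1)
          = Dd (vx j) (fun q => ((B j q : ℝ) : ℂ) * F q) (y, s) := by
      intro j
      exact sliceX' (g := fun y' => ((A y' s j : ℝ) : ℂ) * Ψ y' s)
        (f := fun q => ((B j q : ℝ) : ℂ) * F q) (fun _ => rfl)
        (diffAt hU ((Complex.ofRealCLM.contDiff.comp_contDiffOn (hBc j)).mul hF)
          (Set.mk_mem_prod hy hs)) _
    have ht3 : ∀ j : Fin 3,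
        fderiv ℝ (fun y'' => Ψ y'' s) y (EuclideanSpace.single j 1)
          = Dd (vx j) F (y, s) := by
      intro j
      exact sliceX' (g := fun y'' => Ψ y'' s) (f := F) (fun _ => rfl)
        (diffAt hU hF (Set.mk_mem_prod hy hs)) _
    rw [covLap3] at h
    simp only [hder, ht1, ht2, ht3] at h
    exact h
  -- conclude via `key`
  intro x hx t ht
  have hGsm : ContDiffOn ℝ (⊤ : ℕ∞) (fun r => ∑ j, Dd (vx j) (B j) r) U :=
    ContDiffOn.sum (fun j _ => hDB _ j)
  have hdiv : ∀ τ ∈ I, ∀ x' ∈ Ω, div3 (fun y => A y τ) x'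
      = (fun r : E3 => ∑ j, Dd (vx j) (B j) r) (x', τ) := by
    intro τ hτ x' hx'
    show (∑ j, pd3 j (fun y => A y τ j) x') = _
    exact Finset.sum_congr rfl (fun j _ => hpd3 j j x' hx' τ hτ)
  have hinner : ∀ s ∈ I, deriv (fun τ => div3 (fun y => A y τ) x) s
      = Dd vt (fun r : E3 => ∑ j, Dd (vx j) (B j) r) (x, s) := by
    intro s hs
    have hev : (fun τ => div3 (fun y => A y τ) x)
        =ᶠ[nhds s] (fun τ => (fun r : E3 => ∑ j, Dd (vx j) (B j) r) (x, τ)) := by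
      filter_upwards [hIopen.mem_nhds hs] with τ hτ using hdiv τ hτ x hx
    rw [hev.deriv_eq]
    exact sliceT' (fun _ => rfl) (diffAt hU hGsm (Set.mk_mem_prod hx hs))
  have hev2 : (fun s => deriv (fun τ => div3 (fun y => A y τ) x) s + Complex.normSq (Ψ x s))
      =ᶠ[nhds t] (fun s => (fun q : E3 => Dd vt (fun r : E3 => ∑ j, Dd (vx j) (B j) r) q
        + Complex.normSq (F q)) (x, s)) := by
    filter_upwards [hIopen.mem_nhds ht] with s hs
    rw [hinner s hs]
  rw [hev2.deriv_eq]
  rw [sliceT' (fun _ => rfl) (diffAt hU ((Dd_contDiffOn hU hGsm vt).add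
    (contDiffOn_normSq hF)) (Set.mk_mem_prod hx ht))]
  exact key U hU V₀ F B hF hBc hS hM (x, t) (Set.mk_mem_prod hx ht)

end
end

section
/- Let d ≥ 1, Δt > 0, a, b ∈ ℝ^d regarded inside ℂ^d, u, v ∈ ℂ and p, q ∈ ℂ^d. Set X = i·p + u·a, Y = i·q + v·a and Z = i·q + v·b, and let ⟨·,·⟩ and ‖·‖ be the complex inner product and norm on ℂ^d. Then Re⟨ (X+Y)/2 , (X−Y)/Δt ⟩ = (1/(2Δt))( ‖X‖² − ‖Z‖² ) − |v|²·((a+b)/2)·((a−b)/Δt) − F·((a−b)/Δt), where F = (i/2)( conj(v)·q − v·conj(q) ) ∈ ℂ^d has real components, the dot products are Σ_j of componentwise products, and the right-hand side is real. -/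
open Complex ComplexConjugate

/-!
Since `Re((X + Y) conj (X - Y)) = ‖X‖² - ‖Y‖²`, it remains to compare `‖Y‖²` with `‖Z‖²`.
These differ only in the real coefficient of `v`, and expanding `‖i q + v a‖²` as a quadratic
in `a` produces the `|v|²` term and a term linear in `a` with coefficient `-2 Im(conj v · q)`;
the latter is `2F`, because `F = (i/2)(conj v · q - v · conj q) = -Im(conj v · q)` is real.
-/

theorem re_add_mul_conj_sub (X Y : ℂ) : ((X + Y) * conj (X - Y)).re = normSq X - normSq Y := by
  simp only [mul_re, add_re, add_im, conj_re, conj_im, sub_re, sub_im, normSq_apply]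
  ring

theorem normSq_I_mul_add_mul_ofReal (q v : ℂ) (a : ℝ) :
    normSq (I * q + v * a) = normSq q + normSq v * a ^ 2 - 2 * a * (conj v * q).im := by
  simp only [normSq_apply, add_re, add_im, mul_re, mul_im, I_re, I_im, ofReal_re, ofReal_im,
    conj_re, conj_im]
  ring

theorem I_div_two_mul_conj_mul_sub (v q : ℂ) :
    I / 2 * (conj v * q - v * conj q) = -((conj v * q).im : ℂ) :=
  Complex.ext (by simp; ring) (by simp)

theorem re_add_div_two_mul_conj_sub_div (X v q : ℂ) (a b t : ℝ) :
    ((X + (I * q + v * a)) / 2 * conj ((X - (I * q + v * a)) / t)).re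
      = 1 / (2 * t) * (normSq X - normSq (I * q + v * b))
        - normSq v * ((a + b) / 2 * ((a - b) / t)) + (conj v * q).im * ((a - b) / t) := by
  rw [map_div₀, conj_ofReal, div_mul_div_comm, mul_comm (2 : ℂ), ← ofReal_ofNat, ← ofReal_mul,
    div_ofReal_re, re_add_mul_conj_sub, normSq_I_mul_add_mul_ofReal, normSq_I_mul_add_mul_ofReal]
  ring

theorem stmt7_general (d : ℕ) (Δt : ℝ)
    (a b : Fin d → ℝ) (v : ℂ) (q : Fin d → ℂ)
    (X Y Z : Fin d → ℂ)
    (hY : Y = fun j => Complex.I * q j + v * (a j : ℂ))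
    (hZ : Z = fun j => Complex.I * q j + v * (b j : ℂ)) :
    (((∑ j, ((X j + Y j) / 2) * conj ((X j - Y j) / (Δt : ℂ))).re : ℝ) : ℂ)
      = ((1 / (2 * Δt) * ((∑ j, Complex.normSq (X j)) - ∑ j, Complex.normSq (Z j)) : ℝ) : ℂ)
        - ((Complex.normSq v : ℝ) : ℂ)
            * ((∑ j, ((a j + b j) / 2) * ((a j - b j) / Δt) : ℝ) : ℂ)
        - ∑ j, ((Complex.I / 2) * (conj v * q j - v * conj (q j)))
            * (((a j - b j) / Δt : ℝ) : ℂ) := by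
  subst hY hZ
  rw [re_sum, Finset.sum_congr rfl fun j _ =>
    re_add_div_two_mul_conj_sub_div (X j) v (q j) (a j) (b j) Δt]
  simp only [I_div_two_mul_conj_mul_sub, Finset.sum_add_distrib, Finset.sum_sub_distrib,
    ← Finset.mul_sum]
  push_cast
  simp only [neg_mul, Finset.sum_neg_distrib]
  ring

/-- Pointwise form of the discrete magnetic energy identity (3.11):
with `X = i·p + u·a`, `Y = i·q + v·a`, `Z = i·q + v·b`,
`Re⟨(X+Y)/2, (X−Y)/Δt⟩ = (1/(2Δt))(‖X‖² − ‖Z‖²) − |v|²·((a+b)/2)·((a−b)/Δt) − F·((a−b)/Δt)`,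
where `F = (i/2)(conj(v)·q − v·conj(q))`. -/
theorem stmt7 (d : ℕ) (hd : 1 ≤ d) (Δt : ℝ) (hΔt : 0 < Δt)
    (a b : Fin d → ℝ) (u v : ℂ) (p q : Fin d → ℂ)
    (X Y Z : Fin d → ℂ)
    (hX : X = fun j => Complex.I * p j + u * (a j : ℂ))
    (hY : Y = fun j => Complex.I * q j + v * (a j : ℂ))
    (hZ : Z = fun j => Complex.I * q j + v * (b j : ℂ)) :
    (((∑ j, ((X j + Y j) / 2) * conj ((X j - Y j) / (Δt : ℂ))).re : ℝ) : ℂ)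
      = ((1 / (2 * Δt) * ((∑ j, Complex.normSq (X j)) - ∑ j, Complex.normSq (Z j)) : ℝ) : ℂ)
        - ((Complex.normSq v : ℝ) : ℂ)
            * ((∑ j, ((a j + b j) / 2) * ((a j - b j) / Δt) : ℝ) : ℂ)
        - ∑ j, ((Complex.I / 2) * (conj v * q j - v * conj (q j)))
            * (((a j - b j) / Δt : ℝ) : ℂ) :=
  stmt7_general d Δt a b v q X Y Z hY hZ
end

section
/- Let Ω ⊆ ℝ^d be measurable with Lebesgue measure, Δt > 0 and V₀ ∈ ℝ. Let u, v : Ω → ℂ be square-integrable and differentiable with gradients ∇u, ∇v, and let a, b : Ω → ℝ^d be measurable vector fields. Assume all the integrals below are well defined (their integrands are integrable): the integrand of B(a; (u+v)/2, (u−v)/Δt), (u+v)·conj(u−v), |(u−v)/Δt|², the integrands of B(a; u, u) and B(b; v, v), |v|²·((a+b)/2)·((a−b)/Δt) and f(v,v)·((a−b)/Δt). If the tested scheme identity holds, −i·‖(u−v)/Δt‖²_{L²} + (1/2)·B(a; (u+v)/2, (u−v)/Δt) + V₀·⟨(u+v)/2, (u−v)/Δt⟩_{L²} = 0, then the discrete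 Schrödinger energy identity holds: (1/(2Δt))·( B(a; u, u) − B(b; v, v) ) + (V₀/Δt)·( ‖u‖²_{L²} − ‖v‖²_{L²} ) = ∫_Ω |v|²·((a+b)/2)·((a−b)/Δt) dx + ∫_Ω f(v,v)·((a−b)/Δt) dx. -/
open Complex ComplexConjugate MeasureTheory

noncomputable section

/-- The `j`-th component of the gradient of `f` on `Ω` (from the Fréchet derivative). -/
def gradW {d : ℕ} (Ω : Set (EuclideanSpace ℝ (Fin d)))
    (f : EuclideanSpace ℝ (Fin d) → ℂ) (x : EuclideanSpace ℝ (Fin d)) (j : Fin d) : ℂ :=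
  fderivWithin ℝ f Ω x (EuclideanSpace.single j 1)

/-- The integrand `⟨i∇ψ + ψa, i∇φ + φa⟩` of the magnetic form `B(a; ψ, φ)`. -/
def Bint {d : ℕ} (Ω : Set (EuclideanSpace ℝ (Fin d)))
    (a : EuclideanSpace ℝ (Fin d) → Fin d → ℝ)
    (ψ φ : EuclideanSpace ℝ (Fin d) → ℂ) (x : EuclideanSpace ℝ (Fin d)) : ℂ :=
  ∑ j, (Complex.I * gradW Ω ψ x j + ψ x * (a x j : ℂ))
      * conj (Complex.I * gradW Ω φ x j + φ x * (a x j : ℂ))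

/-- The magnetic sesquilinear form `B(a; ψ, φ) = ∫_Ω ⟨i∇ψ + ψa, i∇φ + φa⟩ dx`. -/
def Bform {d : ℕ} (Ω : Set (EuclideanSpace ℝ (Fin d)))
    (a : EuclideanSpace ℝ (Fin d) → Fin d → ℝ)
    (ψ φ : EuclideanSpace ℝ (Fin d) → ℂ) : ℂ :=
  ∫ x in Ω, Bint Ω a ψ φ x

/-!
Adding the tested identity to its complex conjugate cancels `-i‖(u - v)/Δt‖²` and doubles
the real parts of the other two terms. Pointwise
`2 Re ((p + q)/2 · conj ((p - q)/Δt)) = (|p|² - |q|²)/Δt`, applied to `p = i∇u + ua,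
q = i∇v + va` and to `p = u, q = v`, turns them into `(B(a; u, u) - B(a; v, v))/Δt` and
`(‖u‖² - ‖v‖²)/Δt`. Finally, expanding `|i∇v + va|² - |i∇v + vb|²` trades `B(a; v, v)`
for `B(b; v, v)` plus the two integrals on the right.

The gradient of `(u ± v)/c` within `Ω` is `(∇u ± ∇v)/c` only where derivatives within `Ω` are
unique; this holds at every Lebesgue density point of `Ω`, hence almost everywhere on `Ω`.
-/

open Filter Metric Set Topology

section DensityPoint

variable {E : Type*} [NormedAddCommGroup E] [NormedSpace ℝ E] [MeasurableSpace E] [BorelSpace E]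
  [FiniteDimensional ℝ E] (μ : Measure E) [μ.IsAddHaarMeasure]

theorem tangentConeAt_eq_univ_of_density_one {s : Set E} {x : E}
    (h : Tendsto (fun r => μ (s ∩ closedBall x r) / μ (closedBall x r)) (𝓝[>] 0) (𝓝 1)) :
    tangentConeAt ℝ s x = univ := by
  refine eq_univ_of_forall fun y => ?_
  have hmeet : ∀ n : ℕ, ∃ r : ℝ, (0 < r ∧ r < 1 / (n + 1)) ∧
      ∃ w ∈ closedBall y (1 / (n + 1)), x + r • w ∈ s := by
    intro n
    have hε : (0 : ℝ) < 1 / (n + 1) := by positivity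
    obtain ⟨r, ⟨z, hzs, hz⟩, hr⟩ :=
      ((Measure.eventually_nonempty_inter_smul_of_density_one μ s x h _ measurableSet_closedBall
        (measure_closedBall_pos μ y hε).ne').and (Ioo_mem_nhdsGT hε)).exists
    obtain ⟨w, hw, hwz⟩ : ∃ w ∈ closedBall y (1 / (n + 1)), r • w = -x + z := by
      simpa only [singleton_add, image_add_left, mem_preimage, mem_smul_set] using hz
    exact ⟨r, hr, w, hw, by rwa [hwz, add_neg_cancel_left]⟩
  choose r hr w hw hws using hmeet
  have hr0 : Tendsto r atTop (𝓝 0) :=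
    squeeze_zero (fun n => (hr n).1.le) (fun n => (hr n).2.le)
      tendsto_one_div_add_atTop_nhds_zero_nat
  have hwy : Tendsto w atTop (𝓝 y) :=
    tendsto_iff_dist_tendsto_zero.2 <| squeeze_zero (fun n => dist_nonneg) (fun n => hw n)
      tendsto_one_div_add_atTop_nhds_zero_nat
  refine mem_tangentConeAt_of_seq atTop (fun n => (r n)⁻¹) (fun n => r n • w n) ?_
    (Eventually.of_forall hws) ?_
  · simpa using hr0.smul hwy
  · refine hwy.congr fun n => ?_
    rw [inv_smul_smul₀ (hr n).1.ne']

theorem uniqueDiffWithinAt_of_density_one {s : Set E} {x : E}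
    (h : Tendsto (fun r => μ (s ∩ closedBall x r) / μ (closedBall x r)) (𝓝[>] 0) (𝓝 1)) :
    UniqueDiffWithinAt ℝ s x := by
  have hcone := tangentConeAt_eq_univ_of_density_one μ h
  refine ⟨by simp [hcone], ?_⟩
  rw [← zero_mem_tangentConeAt_iff (𝕜 := ℝ), hcone]
  trivial

theorem ae_restrict_uniqueDiffWithinAt (s : Set E) :
    ∀ᵐ x ∂μ.restrict s, UniqueDiffWithinAt ℝ s x :=
  (Besicovitch.ae_tendsto_measure_inter_div μ s).mono fun _ => uniqueDiffWithinAt_of_density_one μ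

end DensityPoint

theorem Complex.add_div_two_mul_conj_sub_div_add_conj (p q : ℂ) (t : ℝ) :
    (p + q) / 2 * conj ((p - q) / t) + conj ((p + q) / 2 * conj ((p - q) / t))
      = (t : ℂ)⁻¹ * (p * conj p - q * conj q) := by
  simp only [map_add, map_mul, map_sub, map_div₀, conj_ofReal, conj_conj, map_ofNat]
  ring

theorem Complex.I_mul_add_mul_ofReal_mul_conj_sub (g w : ℂ) (α β : ℝ) :
    (I * g + w * α) * conj (I * g + w * α) - (I * g + w * β) * conj (I * g + w * β)
      = normSq w * (α ^ 2 - β ^ 2) + 2 * ((I / 2) * (conj w * g - w * conj g)) * (α - β) := by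
  rw [← mul_conj]
  simp only [map_add, map_mul, conj_I, conj_ofReal]
  ring

section MagneticForm

variable {d : ℕ} {Ω : Set (EuclideanSpace ℝ (Fin d))} {u v : EuclideanSpace ℝ (Fin d) → ℂ}
  {x : EuclideanSpace ℝ (Fin d)}

theorem gradW_add_div (hx : UniqueDiffWithinAt ℝ Ω x) (hu : DifferentiableWithinAt ℝ u Ω x)
    (hv : DifferentiableWithinAt ℝ v Ω x) (c : ℂ) (j : Fin d) :
    gradW Ω (fun y => (u y + v y) / c) x j = (gradW Ω u x j + gradW Ω v x j) / c := by
  have h := (hu.hasFDerivWithinAt.fun_add hv.hasFDerivWithinAt).mul_const c⁻¹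
  simp only [← div_eq_mul_inv] at h
  rw [gradW, h.fderivWithin hx]
  simp [gradW, div_eq_inv_mul, mul_add]

theorem gradW_sub_div (hx : UniqueDiffWithinAt ℝ Ω x) (hu : DifferentiableWithinAt ℝ u Ω x)
    (hv : DifferentiableWithinAt ℝ v Ω x) (c : ℂ) (j : Fin d) :
    gradW Ω (fun y => (u y - v y) / c) x j = (gradW Ω u x j - gradW Ω v x j) / c := by
  have h := (hu.hasFDerivWithinAt.fun_sub hv.hasFDerivWithinAt).mul_const c⁻¹
  simp only [← div_eq_mul_inv] at h
  rw [gradW, h.fderivWithin hx]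
  simp [gradW, div_eq_inv_mul, mul_sub]

theorem Bint_add_div_two_sub_div_add_conj (a : EuclideanSpace ℝ (Fin d) → Fin d → ℝ) (t : ℝ)
    (hx : UniqueDiffWithinAt ℝ Ω x) (hu : DifferentiableWithinAt ℝ u Ω x)
    (hv : DifferentiableWithinAt ℝ v Ω x) :
    Bint Ω a (fun y => (u y + v y) / 2) (fun y => (u y - v y) / (t : ℂ)) x
      + conj (Bint Ω a (fun y => (u y + v y) / 2) (fun y => (u y - v y) / (t : ℂ)) x)
      = (t : ℂ)⁻¹ * (Bint Ω a u u x - Bint Ω a v v x) := by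
  simp only [Bint, gradW_add_div hx hu hv, gradW_sub_div hx hu hv, map_sum,
    ← Finset.sum_add_distrib, ← Finset.sum_sub_distrib, Finset.mul_sum]
  refine Finset.sum_congr rfl fun j _ => ?_
  have hsum : I * ((gradW Ω u x j + gradW Ω v x j) / 2) + (u x + v x) / 2 * a x j
      = ((I * gradW Ω u x j + u x * a x j) + (I * gradW Ω v x j + v x * a x j)) / 2 := by ring
  have hdiff : I * ((gradW Ω u x j - gradW Ω v x j) / t) + (u x - v x) / t * a x j
      = ((I * gradW Ω u x j + u x * a x j) - (I * gradW Ω v x j + v x * a x j)) / t := by ring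
  rw [hsum, hdiff, Complex.add_div_two_mul_conj_sub_div_add_conj]

theorem Bint_sub_Bint (a b : EuclideanSpace ℝ (Fin d) → Fin d → ℝ) :
    Bint Ω a v v x - Bint Ω b v v x = ∑ j, (normSq (v x) * (a x j ^ 2 - b x j ^ 2)
      + 2 * ((I / 2) * (conj (v x) * gradW Ω v x j - v x * conj (gradW Ω v x j)))
        * (a x j - b x j)) := by
  simp only [Bint, ← Finset.sum_sub_distrib, Complex.I_mul_add_mul_ofReal_mul_conj_sub]

theorem Bint_eq_Bint_add_flux {Δt : ℝ} (hΔt : Δt ≠ 0)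
    (a b : EuclideanSpace ℝ (Fin d) → Fin d → ℝ) :
    Bint Ω a v v = fun x => Bint Ω b v v x + ((2 * Δt : ℝ) : ℂ)
      * (((normSq (v x) * ∑ j, ((a x j + b x j) / 2) * ((a x j - b x j) / Δt) : ℝ) : ℂ)
        + ∑ j, ((I / 2) * (conj (v x) * gradW Ω v x j - v x * conj (gradW Ω v x j)))
          * (((a x j - b x j) / Δt : ℝ) : ℂ)) := by
  have hΔt' : (Δt : ℂ) ≠ 0 := ofReal_ne_zero.2 hΔt
  funext x
  rw [← sub_eq_iff_eq_add', Bint_sub_Bint]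
  push_cast
  rw [Finset.mul_sum, ← Finset.sum_add_distrib, Finset.mul_sum]
  refine Finset.sum_congr rfl fun j _ => ?_
  field_simp
  ring

end MagneticForm

section Integral

variable {α : Type*} [MeasurableSpace α] {μ : Measure α}

theorem MeasureTheory.Integrable.conj {f : α → ℂ} (hf : Integrable f μ) :
    Integrable (fun x => conj (f x)) μ :=
  (conjCLE : ℂ →L[ℝ] ℂ).integrable_comp hf

theorem MeasureTheory.MemLp.integrable_normSq {f : α → ℂ} (hf : MemLp f 2 μ) :
    Integrable (fun x => normSq (f x)) μ :=
  hf.norm.integrable_sq.congr (.of_forall fun x => by simp [normSq_eq_norm_sq])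

theorem integral_add_conj_integral_eq {f g h : α → ℂ} (hf : Integrable f μ)
    (hg : Integrable g μ) (hh : Integrable h μ) (c : ℂ)
    (hfgh : ∀ᵐ x ∂μ, f x + conj (f x) = c * (g x - h x)) :
    (∫ x, f x ∂μ) + conj (∫ x, f x ∂μ) = c * ((∫ x, g x ∂μ) - ∫ x, h x ∂μ) := by
  rw [← integral_conj, ← integral_add hf hf.conj, integral_congr_ae hfgh, integral_const_mul,
    integral_sub hg hh]

theorem integral_add_div_two_mul_conj_sub_div_add_conj {u v : α → ℂ}
    (huv : Integrable (fun x => (u x + v x) * conj (u x - v x)) μ) (hu : MemLp u 2 μ)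
    (hv : MemLp v 2 μ) (t : ℝ) :
    (∫ x, (u x + v x) / 2 * conj ((u x - v x) / t) ∂μ)
        + conj (∫ x, (u x + v x) / 2 * conj ((u x - v x) / t) ∂μ)
      = (t : ℂ)⁻¹ * (((∫ x, normSq (u x) ∂μ : ℝ) : ℂ) - ((∫ x, normSq (v x) ∂μ : ℝ) : ℂ)) := by
  rw [← integral_complex_ofReal, ← integral_complex_ofReal]
  refine integral_add_conj_integral_eq ?_ (by exact hu.integrable_normSq.ofReal)
    (by exact hv.integrable_normSq.ofReal) _ (.of_forall fun x => ?_)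
  · refine (huv.const_mul (2 * t : ℂ)⁻¹).congr (.of_forall fun x => ?_)
    simp only [map_div₀, conj_ofReal]
    ring
  · simp only [← Complex.mul_conj]
    exact Complex.add_div_two_mul_conj_sub_div_add_conj _ _ _

end Integral

section MagneticEnergy

variable {d : ℕ} {Ω : Set (EuclideanSpace ℝ (Fin d))} {u v : EuclideanSpace ℝ (Fin d) → ℂ}
  {a : EuclideanSpace ℝ (Fin d) → Fin d → ℝ}

theorem Bform_add_div_two_sub_div_add_conj (hΩ : MeasurableSet Ω) (hu : DifferentiableOn ℝ u Ω)
    (hv : DifferentiableOn ℝ v Ω) {t : ℝ}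
    (huv : Integrable (Bint Ω a (fun x => (u x + v x) / 2) (fun x => (u x - v x) / (t : ℂ)))
      (volume.restrict Ω))
    (hau : Integrable (Bint Ω a u u) (volume.restrict Ω))
    (hav : Integrable (Bint Ω a v v) (volume.restrict Ω)) :
    Bform Ω a (fun x => (u x + v x) / 2) (fun x => (u x - v x) / (t : ℂ))
        + conj (Bform Ω a (fun x => (u x + v x) / 2) (fun x => (u x - v x) / (t : ℂ)))
      = (t : ℂ)⁻¹ * (Bform Ω a u u - Bform Ω a v v) :=
  integral_add_conj_integral_eq huv hau hav _ <|
    ((ae_restrict_mem hΩ).and (ae_restrict_uniqueDiffWithinAt volume Ω)).mono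
      fun x ⟨hxΩ, hx⟩ => Bint_add_div_two_sub_div_add_conj a t hx (hu x hxΩ) (hv x hxΩ)

theorem Bform_sub_Bform_eq_flux {Δt : ℝ} (hΔt : Δt ≠ 0)
    (b : EuclideanSpace ℝ (Fin d) → Fin d → ℝ)
    (hb : Integrable (Bint Ω b v v) (volume.restrict Ω))
    (hρ : Integrable (fun x => normSq (v x)
      * ∑ j, ((a x j + b x j) / 2) * ((a x j - b x j) / Δt)) (volume.restrict Ω))
    (hJ : Integrable (fun x => ∑ j, ((I / 2) * (conj (v x) * gradW Ω v x j
      - v x * conj (gradW Ω v x j))) * (((a x j - b x j) / Δt : ℝ) : ℂ)) (volume.restrict Ω)) :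
    ((1 / (2 * Δt) : ℝ) : ℂ) * (Bform Ω a v v - Bform Ω b v v)
      = ((∫ x in Ω, normSq (v x) * ∑ j, ((a x j + b x j) / 2) * ((a x j - b x j) / Δt) : ℝ) : ℂ)
        + ∫ x in Ω, ∑ j, ((I / 2) * (conj (v x) * gradW Ω v x j - v x * conj (gradW Ω v x j)))
          * (((a x j - b x j) / Δt : ℝ) : ℂ) := by
  have h2Δt : ((2 * Δt : ℝ) : ℂ) ≠ 0 := ofReal_ne_zero.2 (mul_ne_zero two_ne_zero hΔt)
  rw [Bform, Bint_eq_Bint_add_flux hΔt a b,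
    integral_add hb (by exact (hρ.ofReal.add hJ).const_mul _), integral_const_mul,
    integral_add (by exact hρ.ofReal) hJ, integral_complex_ofReal, ← Bform,
    add_sub_cancel_left, ← mul_assoc, one_div, ofReal_inv, inv_mul_cancel₀ h2Δt, one_mul]

end MagneticEnergy

theorem stmt9_general (d : ℕ) (Ω : Set (EuclideanSpace ℝ (Fin d))) (hΩ : MeasurableSet Ω)
    (Δt : ℝ) (hΔt : 0 < Δt) (V₀ : ℝ)
    (u v : EuclideanSpace ℝ (Fin d) → ℂ)
    (a b : EuclideanSpace ℝ (Fin d) → Fin d → ℝ)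
    (hu2 : MemLp u 2 (volume.restrict Ω)) (hv2 : MemLp v 2 (volume.restrict Ω))
    (hud : DifferentiableOn ℝ u Ω) (hvd : DifferentiableOn ℝ v Ω)
    (hint1 : Integrable (Bint Ω a (fun x => (u x + v x) / 2)
        (fun x => (u x - v x) / (Δt : ℂ))) (volume.restrict Ω))
    (hint2 : Integrable (fun x => (u x + v x) * conj (u x - v x)) (volume.restrict Ω))
    (hint4 : Integrable (Bint Ω a u u) (volume.restrict Ω))
    (hint5 : Integrable (Bint Ω b v v) (volume.restrict Ω))
    (hint6 : Integrable (fun x => Complex.normSq (v x)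
        * ∑ j, ((a x j + b x j) / 2) * ((a x j - b x j) / Δt)) (volume.restrict Ω))
    (hint7 : Integrable (fun x => ∑ j, ((Complex.I / 2) * (conj (v x) * gradW Ω v x j
        - v x * conj (gradW Ω v x j))) * (((a x j - b x j) / Δt : ℝ) : ℂ))
        (volume.restrict Ω))
    (heq : -Complex.I * ((∫ x in Ω, Complex.normSq ((u x - v x) / (Δt : ℂ)) : ℝ) : ℂ)
        + (1 / 2 : ℂ) * Bform Ω a (fun x => (u x + v x) / 2) (fun x => (u x - v x) / (Δt : ℂ))
        + (V₀ : ℂ) * (∫ x in Ω, ((u x + v x) / 2) * conj ((u x - v x) / (Δt : ℂ))) = 0) :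
    ((1 / (2 * Δt) : ℝ) : ℂ) * (Bform Ω a u u - Bform Ω b v v)
        + ((V₀ / Δt : ℝ) : ℂ) * (((∫ x in Ω, Complex.normSq (u x))
            - ∫ x in Ω, Complex.normSq (v x) : ℝ) : ℂ)
      = ((∫ x in Ω, Complex.normSq (v x)
            * ∑ j, ((a x j + b x j) / 2) * ((a x j - b x j) / Δt) : ℝ) : ℂ)
        + ∫ x in Ω, ∑ j, ((Complex.I / 2) * (conj (v x) * gradW Ω v x j
            - v x * conj (gradW Ω v x j))) * (((a x j - b x j) / Δt : ℝ) : ℂ) := by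
  have hBvv : Integrable (Bint Ω a v v) (volume.restrict Ω) := by
    rw [Bint_eq_Bint_add_flux hΔt.ne' a b]
    exact hint5.add ((hint6.ofReal.add hint7).const_mul _)
  have hB := Bform_add_div_two_sub_div_add_conj hΩ hud hvd hint1 hint4 hBvv
  have hS := integral_add_div_two_mul_conj_sub_div_add_conj hint2 hu2 hv2 Δt
  have hflux := Bform_sub_Bform_eq_flux hΔt.ne' b hint5 hint6 hint7
  have hconj := congrArg conj heq
  have hhalf : conj (1 / 2 : ℂ) = 1 / 2 := by rw [map_div₀, map_one, map_ofNat]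
  simp only [map_add, map_mul, map_neg, map_zero, conj_I, conj_ofReal, hhalf, neg_neg] at hconj
  rw [← hflux]
  push_cast
  linear_combination heq + hconj - (1 / 2 : ℂ) * hB - (V₀ : ℂ) * hS

/-- Identity (3.13): testing the Crank–Nicolson Schrödinger scheme with `(u−v)/Δt` and
taking the real part yields the discrete Schrödinger energy identity. -/
theorem stmt9 (d : ℕ) (Ω : Set (EuclideanSpace ℝ (Fin d))) (hΩ : MeasurableSet Ω)
    (Δt : ℝ) (hΔt : 0 < Δt) (V₀ : ℝ)
    (u v : EuclideanSpace ℝ (Fin d) → ℂ)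
    (a b : EuclideanSpace ℝ (Fin d) → Fin d → ℝ)
    (hu2 : MemLp u 2 (volume.restrict Ω)) (hv2 : MemLp v 2 (volume.restrict Ω))
    (hud : DifferentiableOn ℝ u Ω) (hvd : DifferentiableOn ℝ v Ω)
    (ha : Measurable a) (hb : Measurable b)
    (hint1 : Integrable (Bint Ω a (fun x => (u x + v x) / 2)
        (fun x => (u x - v x) / (Δt : ℂ))) (volume.restrict Ω))
    (hint2 : Integrable (fun x => (u x + v x) * conj (u x - v x)) (volume.restrict Ω))
    (hint3 : Integrable (fun x => Complex.normSq ((u x - v x) / (Δt : ℂ)))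
        (volume.restrict Ω))
    (hint4 : Integrable (Bint Ω a u u) (volume.restrict Ω))
    (hint5 : Integrable (Bint Ω b v v) (volume.restrict Ω))
    (hint6 : Integrable (fun x => Complex.normSq (v x)
        * ∑ j, ((a x j + b x j) / 2) * ((a x j - b x j) / Δt)) (volume.restrict Ω))
    (hint7 : Integrable (fun x => ∑ j, ((Complex.I / 2) * (conj (v x) * gradW Ω v x j
        - v x * conj (gradW Ω v x j))) * (((a x j - b x j) / Δt : ℝ) : ℂ))
        (volume.restrict Ω))
    (heq : -Complex.I * ((∫ x in Ω, Complex.normSq ((u x - v x) / (Δt : ℂ)) : ℝ) : ℂ)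
        + (1 / 2 : ℂ) * Bform Ω a (fun x => (u x + v x) / 2) (fun x => (u x - v x) / (Δt : ℂ))
        + (V₀ : ℂ) * (∫ x in Ω, ((u x + v x) / 2) * conj ((u x - v x) / (Δt : ℂ))) = 0) :
    ((1 / (2 * Δt) : ℝ) : ℂ) * (Bform Ω a u u - Bform Ω b v v)
        + ((V₀ / Δt : ℝ) : ℂ) * (((∫ x in Ω, Complex.normSq (u x))
            - ∫ x in Ω, Complex.normSq (v x) : ℝ) : ℂ)
      = ((∫ x in Ω, Complex.normSq (v x)
            * ∑ j, ((a x j + b x j) / 2) * ((a x j - b x j) / Δt) : ℝ) : ℂ)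
        + ∫ x in Ω, ∑ j, ((Complex.I / 2) * (conj (v x) * gradW Ω v x j
            - v x * conj (gradW Ω v x j))) * (((a x j - b x j) / Δt : ℝ) : ℂ) :=
  stmt9_general d Ω hΩ Δt hΔt V₀ u v a b hu2 hv2 hud hvd hint1 hint2 hint4 hint5 hint6 hint7 heq

end
end

section
/- Let Ω ⊆ ℝ^d be measurable with Lebesgue measure. Let ψ : Ω → ℂ be differentiable with gradient ∇ψ, and let A : Ω → ℝ^d be measurable. Assume ∇ψ ∈ L²(Ω; ℂ^d), ψ ∈ L²(Ω) ∩ L⁶(Ω), ‖A‖_{L⁶} < ∞, and let S ≥ 0 satisfy the Sobolev-type bound ‖ψ‖_{L⁶} ≤ S·‖∇ψ‖_{L²}. Then ‖∇ψ‖_{L²} ≤ 2·‖ i∇ψ + ψA ‖_{L²} + S·‖A‖²_{L⁶}·‖ψ‖_{L²}. -/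
/-!
Since `i∇ψ = (i∇ψ + ψA) - ψA`, Minkowski's inequality, Hölder's inequality with
`1/2 = 1/3 + 1/6` and the interpolation `‖ψ‖₃ ≤ ‖ψ‖₂^{1/2} ‖ψ‖₆^{1/2}` give
`‖∇ψ‖₂ ≤ ‖i∇ψ + ψA‖₂ + ‖A‖₆ ‖ψ‖₂^{1/2} ‖ψ‖₆^{1/2}`. By the Sobolev bound the last term is at most
`√(‖∇ψ‖₂ · S‖A‖₆²‖ψ‖₂) ≤ ½‖∇ψ‖₂ + ½ S‖A‖₆²‖ψ‖₂`, and the term `½‖∇ψ‖₂` is absorbed on the left.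
-/

open Complex MeasureTheory
open scoped ENNReal

noncomputable section

theorem le_two_mul_add_of_le_add_sqrt_mul {g c y : ℝ} (hg : 0 ≤ g) (hy : 0 ≤ y)
    (h : g ≤ c + √(g * y)) : g ≤ 2 * c + y := by
  rw [Real.sqrt_mul hg] at h
  nlinarith [sq_nonneg (√g - √y), Real.sq_sqrt hg, Real.sq_sqrt hy]

namespace MeasureTheory

section Lp

variable {α E : Type*} [MeasurableSpace α] {μ : Measure α} [NormedAddCommGroup E] {f : α → E}
  {p q r : ℝ≥0∞}

theorem eLpNorm_le_eLpNorm_rpow_mul_eLpNorm_rpow (hf : AEStronglyMeasurable f μ)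
    (hpqr : p⁻¹ + q⁻¹ = 2 * r⁻¹) :
    eLpNorm f r μ ≤ eLpNorm f p μ ^ (1 / 2 : ℝ) * eLpNorm f q μ ^ (1 / 2 : ℝ) := by
  have two_mul_half (s : ℝ≥0∞) : 2 * s * ENNReal.ofReal (1 / 2) = s := by
    rw [one_div, ENNReal.ofReal_inv_of_pos two_pos, ENNReal.ofReal_ofNat, mul_comm,
      ← mul_assoc, ENNReal.inv_mul_cancel two_ne_zero ENNReal.ofNat_ne_top, one_mul]
  have : ENNReal.HolderTriple (2 * p) (2 * q) r := ⟨by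
    rw [ENNReal.mul_inv (by simp) (by simp), ENNReal.mul_inv (by simp) (by simp), ← mul_add,
      hpqr, ← mul_assoc, ENNReal.inv_mul_cancel two_ne_zero ENNReal.ofNat_ne_top, one_mul]⟩
  let g : α → ℝ := fun x => ‖f x‖ ^ (1 / 2 : ℝ)
  have hg : AEStronglyMeasurable g μ :=
    (Real.continuous_rpow_const (by norm_num)).comp_aestronglyMeasurable hf.norm
  calc eLpNorm f r μ = eLpNorm (g • g) r μ := by
        refine eLpNorm_congr_norm_ae (ae_of_all _ fun x => ?_)
        change ‖f x‖ = ‖‖f x‖ ^ (1 / 2 : ℝ) * ‖f x‖ ^ (1 / 2 : ℝ)‖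
        rw [← Real.sqrt_eq_rpow, Real.mul_self_sqrt (norm_nonneg _), norm_norm]
    _ ≤ eLpNorm g (2 * p) μ * eLpNorm g (2 * q) μ := eLpNorm_smul_le_mul_eLpNorm hg hg
    _ = _ := by
      rw [eLpNorm_norm_rpow f (by norm_num), eLpNorm_norm_rpow f (by norm_num), two_mul_half,
        two_mul_half]

theorem MemLp.of_inv_add_inv_eq_two_mul_inv (hp : MemLp f p μ) (hq : MemLp f q μ)
    (hpqr : p⁻¹ + q⁻¹ = 2 * r⁻¹) : MemLp f r μ :=
  ⟨hp.1, (eLpNorm_le_eLpNorm_rpow_mul_eLpNorm_rpow hp.1 hpqr).trans_lt <|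
    ENNReal.mul_lt_top (ENNReal.rpow_lt_top_of_nonneg (by norm_num) hp.eLpNorm_ne_top)
      (ENNReal.rpow_lt_top_of_nonneg (by norm_num) hq.eLpNorm_ne_top)⟩

theorem lpNorm_le_sqrt_mul_sqrt (hp : MemLp f p μ) (hq : MemLp f q μ)
    (hpqr : p⁻¹ + q⁻¹ = 2 * r⁻¹) : lpNorm f r μ ≤ √(lpNorm f p μ) * √(lpNorm f q μ) := by
  rw [← toReal_eLpNorm hp.1, ← toReal_eLpNorm hp.1, ← toReal_eLpNorm hq.1, Real.sqrt_eq_rpow,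
    Real.sqrt_eq_rpow, ENNReal.toReal_rpow, ENNReal.toReal_rpow, ← ENNReal.toReal_mul]
  exact ENNReal.toReal_mono (by finiteness [hp.eLpNorm_ne_top, hq.eLpNorm_ne_top])
    (eLpNorm_le_eLpNorm_rpow_mul_eLpNorm_rpow hp.1 hpqr)

theorem lpNorm_smul_le_mul_lpNorm {𝕜 : Type*} [NormedField 𝕜] [NormedSpace 𝕜 E] {φ : α → 𝕜}
    [ENNReal.HolderTriple p q r] (hφ : MemLp φ p μ) (hf : MemLp f q μ) :
    lpNorm (φ • f) r μ ≤ lpNorm φ p μ * lpNorm f q μ := by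
  rw [← toReal_eLpNorm (hφ.1.smul hf.1), ← toReal_eLpNorm hφ.1, ← toReal_eLpNorm hf.1,
    ← ENNReal.toReal_mul]
  exact ENNReal.toReal_mono (by finiteness [hφ.eLpNorm_ne_top, hf.eLpNorm_ne_top])
    (eLpNorm_smul_le_mul_eLpNorm hf.1 hφ.1)

theorem memLp_ofNat_of_integrable_norm_pow (n : ℕ) [n.AtLeastTwo]
    (hf : AEStronglyMeasurable f μ) (h : Integrable (fun x => ‖f x‖ ^ (ofNat(n) : ℕ)) μ) :
    MemLp f ofNat(n) μ :=
  (integrable_norm_rpow_iff hf (by simp) (by simp)).1 (by simpa using h)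

theorem lpNorm_ofNat_eq_integral_norm_pow (n : ℕ) [n.AtLeastTwo]
    (hf : AEStronglyMeasurable f μ) :
    lpNorm f ofNat(n) μ = (∫ x, ‖f x‖ ^ (ofNat(n) : ℕ) ∂μ) ^ (1 / ofNat(n) : ℝ) := by
  rw [lpNorm_eq_integral_norm_rpow_toReal (by simp) (by simp) hf]
  simp [one_div]

theorem lpNorm_two_le_of_sobolev [NormedSpace ℂ E] {G a : α → E} {ψ : α → ℂ}
    (hG : MemLp G 2 μ) (hψ₂ : MemLp ψ 2 μ) (hψ₆ : MemLp ψ 6 μ) (ha : MemLp a 6 μ) {S : ℝ}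
    (hS : 0 ≤ S) (hSob : lpNorm ψ 6 μ ≤ S * lpNorm G 2 μ) :
    lpNorm G 2 μ
      ≤ 2 * lpNorm (Complex.I • G + ψ • a) 2 μ + S * lpNorm a 6 μ ^ 2 * lpNorm ψ 2 μ := by
  have : ENNReal.HolderTriple 3 6 2 := ⟨by
    rw [← ENNReal.toReal_eq_toReal_iff' (by simp) (by simp),
      ENNReal.toReal_add (by simp) (by simp)]
    norm_num⟩
  have h₂₆ : (2 : ℝ≥0∞)⁻¹ + 6⁻¹ = 2 * 3⁻¹ := by
    rw [← ENNReal.toReal_eq_toReal_iff' (by simp) (by finiteness),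
      ENNReal.toReal_add (by simp) (by simp), ENNReal.toReal_mul]
    norm_num
  have hψ₃ : MemLp ψ 3 μ := hψ₂.of_inv_add_inv_eq_two_mul_inv hψ₆ h₂₆
  have hmink : lpNorm G 2 μ ≤ lpNorm (Complex.I • G + ψ • a) 2 μ + lpNorm (ψ • a) 2 μ :=
    calc lpNorm G 2 μ = lpNorm (Complex.I • G + ψ • a - ψ • a) 2 μ := by
          simp [lpNorm_const_smul]
      _ ≤ _ := lpNorm_sub_le ((hG.const_smul _).add (ha.smul hψ₃)) one_le_two
  have hholder : lpNorm (ψ • a) 2 μ ≤ √(lpNorm ψ 2 μ) * √(lpNorm ψ 6 μ) * lpNorm a 6 μ :=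
    (lpNorm_smul_le_mul_lpNorm hψ₃ ha).trans <|
      mul_le_mul_of_nonneg_right (lpNorm_le_sqrt_mul_sqrt hψ₂ hψ₆ h₂₆) lpNorm_nonneg
  have hG₀ : 0 ≤ lpNorm G 2 μ := lpNorm_nonneg
  have ha₀ : 0 ≤ lpNorm a 6 μ := lpNorm_nonneg
  have hψ₀ : 0 ≤ lpNorm ψ 2 μ := lpNorm_nonneg
  refine le_two_mul_add_of_le_add_sqrt_mul hG₀ (by positivity) ?_
  calc lpNorm G 2 μ
      ≤ lpNorm (Complex.I • G + ψ • a) 2 μ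
          + √(lpNorm ψ 2 μ) * √(lpNorm ψ 6 μ) * lpNorm a 6 μ := hmink.trans (by gcongr)
    _ ≤ lpNorm (Complex.I • G + ψ • a) 2 μ
          + √(lpNorm ψ 2 μ) * √(S * lpNorm G 2 μ) * lpNorm a 6 μ := by gcongr
    _ = lpNorm (Complex.I • G + ψ • a) 2 μ
          + √(lpNorm G 2 μ * (S * lpNorm a 6 μ ^ 2 * lpNorm ψ 2 μ)) := by
        rw [show lpNorm G 2 μ * (S * lpNorm a 6 μ ^ 2 * lpNorm ψ 2 μ)
            = (√(lpNorm ψ 2 μ) * √(S * lpNorm G 2 μ) * lpNorm a 6 μ) ^ 2 by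
              rw [mul_pow, mul_pow, Real.sq_sqrt hψ₀, Real.sq_sqrt (by positivity)]
              ring,
          Real.sqrt_sq (by positivity)]

theorem rpow_integral_norm_sq_le_of_sobolev [NormedSpace ℂ E] {G a : α → E} {ψ : α → ℂ}
    (hGm : AEStronglyMeasurable G μ) (hψm : AEStronglyMeasurable ψ μ)
    (ham : AEStronglyMeasurable a μ) (hG : Integrable (fun x => ‖G x‖ ^ 2) μ)
    (hψ₂ : Integrable (fun x => ‖ψ x‖ ^ 2) μ) (hψ₆ : Integrable (fun x => ‖ψ x‖ ^ 6) μ)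
    (ha : Integrable (fun x => ‖a x‖ ^ 6) μ) {S : ℝ} (hS : 0 ≤ S)
    (hSob : (∫ x, ‖ψ x‖ ^ 6 ∂μ) ^ (1 / 6 : ℝ) ≤ S * (∫ x, ‖G x‖ ^ 2 ∂μ) ^ (1 / 2 : ℝ)) :
    (∫ x, ‖G x‖ ^ 2 ∂μ) ^ (1 / 2 : ℝ)
      ≤ 2 * (∫ x, ‖Complex.I • G x + ψ x • a x‖ ^ 2 ∂μ) ^ (1 / 2 : ℝ)
        + S * ((∫ x, ‖a x‖ ^ 6 ∂μ) ^ (1 / 6 : ℝ)) ^ 2 * (∫ x, ‖ψ x‖ ^ 2 ∂μ) ^ (1 / 2 : ℝ) := by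
  have key := lpNorm_two_le_of_sobolev (memLp_ofNat_of_integrable_norm_pow 2 hGm hG)
    (memLp_ofNat_of_integrable_norm_pow 2 hψm hψ₂) (memLp_ofNat_of_integrable_norm_pow 6 hψm hψ₆)
    (memLp_ofNat_of_integrable_norm_pow 6 ham ha) hS
    (by rwa [lpNorm_ofNat_eq_integral_norm_pow 6 hψm, lpNorm_ofNat_eq_integral_norm_pow 2 hGm])
  rwa [lpNorm_ofNat_eq_integral_norm_pow 2 hGm, lpNorm_ofNat_eq_integral_norm_pow 6 ham,
    lpNorm_ofNat_eq_integral_norm_pow 2 hψm,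
    lpNorm_ofNat_eq_integral_norm_pow 2 ((hGm.const_smul Complex.I).add (hψm.smul ham))] at key

end Lp

end MeasureTheory

section FDeriv

variable {E F : Type*} [NormedAddCommGroup E] [NormedSpace ℝ E] [FiniteDimensional ℝ E]
  [MeasurableSpace E] [BorelSpace E] {μ : Measure E} [μ.IsAddHaarMeasure]
  [NormedAddCommGroup F] [NormedSpace ℝ F] {s : Set E}

/- `aemeasurable_fderivWithin` only covers maps `E → E`: apply it to `x ↦ ℓ (f x) • v` and
read off `ℓ (f' x v)` with a functional `φ` such that `φ v = 1`. -/
theorem aemeasurable_clm_fderivWithin_apply {f : E → F} (hs : MeasurableSet s)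
    (hf : DifferentiableOn ℝ f s) (ℓ : F →L[ℝ] ℝ) (v : E) :
    AEMeasurable (fun x => ℓ (fderivWithin ℝ f s x v)) (μ.restrict s) := by
  rcases eq_or_ne v 0 with rfl | hv
  · simp only [map_zero]
    exact aemeasurable_const
  obtain ⟨φ, hφ⟩ := SeparatingDual.exists_eq_one (R := ℝ) hv
  have hderiv : AEMeasurable (fun x => (ℓ.comp (fderivWithin ℝ f s x)).smulRight v)
      (μ.restrict s) :=
    aemeasurable_fderivWithin μ (f := fun x => ℓ (f x) • v) hs fun x hx =>
      ((ℓ.hasFDerivAt.comp_hasFDerivWithinAt x (hf x hx).hasFDerivWithinAt).smul_const v)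
  have hcont : Continuous fun T : E →L[ℝ] E => φ (T v) :=
    φ.continuous.comp (ContinuousLinearMap.apply ℝ E v).continuous
  refine (hcont.measurable.comp_aemeasurable hderiv).congr (ae_of_all _ fun x => ?_)
  simp [hφ]

theorem aemeasurable_fderivWithin_apply {𝕜 : Type*} [RCLike 𝕜] {f : E → 𝕜}
    (hs : MeasurableSet s) (hf : DifferentiableOn ℝ f s) (v : E) :
    AEMeasurable (fun x => fderivWithin ℝ f s x v) (μ.restrict s) :=
  aemeasurable_of_re_im (aemeasurable_clm_fderivWithin_apply hs hf RCLike.reCLM v)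
    (aemeasurable_clm_fderivWithin_apply hs hf RCLike.imCLM v)

end FDeriv

/-- The absorption estimate from the proof of Theorem 3.1:
`‖∇ψ‖_{L²} ≤ 2‖i∇ψ + ψA‖_{L²} + S‖A‖²_{L⁶}‖ψ‖_{L²}`,
where `S` is a Sobolev constant with `‖ψ‖_{L⁶} ≤ S‖∇ψ‖_{L²}`. -/
theorem stmt13 (d : ℕ) (Ω : Set (EuclideanSpace ℝ (Fin d))) (hΩ : MeasurableSet Ω)
    (ψ : EuclideanSpace ℝ (Fin d) → ℂ) (A : EuclideanSpace ℝ (Fin d) → Fin d → ℝ)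
    (hψd : DifferentiableOn ℝ ψ Ω) (hA : Measurable A)
    (hGψ : Integrable (fun x => ∑ j, Complex.normSq (gradW Ω ψ x j)) (volume.restrict Ω))
    (hψ2 : Integrable (fun x => Complex.normSq (ψ x)) (volume.restrict Ω))
    (hψ6 : Integrable (fun x => ‖ψ x‖ ^ (6 : ℕ)) (volume.restrict Ω))
    (hA6 : Integrable (fun x => Real.sqrt (∑ j, (A x j) ^ 2) ^ (6 : ℕ)) (volume.restrict Ω))
    (S : ℝ) (hS : 0 ≤ S)
    (hSob : (∫ x in Ω, ‖ψ x‖ ^ (6 : ℕ)) ^ ((1 : ℝ) / 6)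
      ≤ S * (∫ x in Ω, ∑ j, Complex.normSq (gradW Ω ψ x j)) ^ ((1 : ℝ) / 2)) :
    (∫ x in Ω, ∑ j, Complex.normSq (gradW Ω ψ x j)) ^ ((1 : ℝ) / 2)
      ≤ 2 * (∫ x in Ω, ∑ j, Complex.normSq
            (Complex.I * gradW Ω ψ x j + ψ x * (A x j : ℂ))) ^ ((1 : ℝ) / 2)
        + S * ((∫ x in Ω, Real.sqrt (∑ j, (A x j) ^ 2) ^ (6 : ℕ)) ^ ((1 : ℝ) / 6)) ^ (2 : ℕ)
          * (∫ x in Ω, Complex.normSq (ψ x)) ^ ((1 : ℝ) / 2) := by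
  let G x : EuclideanSpace ℂ (Fin d) := WithLp.toLp 2 (gradW Ω ψ x)
  let a x : EuclideanSpace ℂ (Fin d) := WithLp.toLp 2 fun j => (A x j : ℂ)
  have hGm : AEStronglyMeasurable G (volume.restrict Ω) :=
    (PiLp.continuous_toLp 2 _).comp_aestronglyMeasurable (aemeasurable_pi_lambda _ fun j =>
      aemeasurable_fderivWithin_apply hΩ hψd _).aestronglyMeasurable
  have ham : AEStronglyMeasurable a (volume.restrict Ω) :=
    ((PiLp.continuous_toLp 2 _).measurable.comp (measurable_pi_lambda _ fun j =>
      Complex.measurable_ofReal.comp (measurable_pi_apply j |>.comp hA))).aestronglyMeasurable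
  have hG_sq x : ‖G x‖ ^ 2 = ∑ j, Complex.normSq (gradW Ω ψ x j) := by
    simp [G, EuclideanSpace.norm_sq_eq, Complex.normSq_eq_norm_sq]
  have hC_sq x : ‖Complex.I • G x + ψ x • a x‖ ^ 2
      = ∑ j, Complex.normSq (Complex.I * gradW Ω ψ x j + ψ x * (A x j : ℂ)) := by
    simp [G, a, EuclideanSpace.norm_sq_eq, Complex.normSq_eq_norm_sq]
  have ha_norm x : ‖a x‖ = √(∑ j, A x j ^ 2) := by
    simp [a, EuclideanSpace.norm_eq]
  have key := rpow_integral_norm_sq_le_of_sobolev hGm (hψd.continuousOn.aestronglyMeasurable hΩ)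
    ham (by simpa only [hG_sq] using hGψ) (by simpa only [Complex.normSq_eq_norm_sq] using hψ2)
    hψ6 (by simpa only [ha_norm] using hA6) hS (by simpa only [hG_sq] using hSob)
  simpa only [hG_sq, hC_sq, ha_norm, ← Complex.normSq_eq_norm_sq] using key

end
end
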